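/- For every positive integer a: V_a is an isometry satisfying V_aS = S^aV_a and S^{*a}V_a = V_aS^*, and consequently, for every bounded operator T on ℓ²(ℕ) and all nonnegative integers m, n, the transfer-operator identity V_a*(S^{am}S^{*an}T)V_a = S^mS^{*n}(V_a*TV_a) holds. -/

import Mathlib

open ContinuousLinearMap
open scoped InnerProductSpace

section Aux
variable {H : Type*} [NormedAddCommGroup H] [InnerProductSpace ℂ H] [CompleteSpace H]

lemma basis_ext (e : HilbertBasis ℕ ℂ H) {f g : H →L[ℂ] H}
    (h : ∀ n, f (e n) = g (e n)) : f = g := by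
  refine ContinuousLinearMap.ext_on (s := Set.range e)
    (Submodule.dense_iff_topologicalClosure_eq_top.mpr e.dense_span) ?_
  rintro x ⟨n, rfl⟩
  exact h n

lemma vec_ext (e : HilbertBasis ℕ ℂ H) {x y : H}
    (h : ∀ n, ⟪e n, x⟫_ℂ = ⟪e n, y⟫_ℂ) : x = y := by
  apply e.repr.injective
  ext n
  rw [e.repr_apply_apply, e.repr_apply_apply]
  exact h n

end Aux

/-- On `ℓ²(ℕ)` (abstractly: a Hilbert space with Hilbert basis `(e_n)`),
with `S` the unilateral shift and `V = V_a` determined by `V e_n = e_{an}` for a positive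
integer `a`: `V` is an isometry satisfying `V S = S^a V` and `S^{*a} V = V S^*`, and for every
bounded operator `T` and all `m, n ∈ ℕ` the transfer-operator identity
`V* (S^{am} S^{*an} T) V = S^m S^{*n} (V* T V)` holds. -/
theorem stmt12 {H : Type*} [NormedAddCommGroup H] [InnerProductSpace ℂ H] [CompleteSpace H]
    (e : HilbertBasis ℕ ℂ H) (S : H →L[ℂ] H) (hS : ∀ n, S (e n) = e (n + 1))
    (a : ℕ) (ha : 0 < a) (V : H →L[ℂ] H) (hV : ∀ n, V (e n) = e (a * n)) :
    adjoint V * V = 1 ∧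
    V * S = S ^ a * V ∧
    (adjoint S) ^ a * V = V * adjoint S ∧
    (∀ (T : H →L[ℂ] H) (m n : ℕ),
      adjoint V * (S ^ (a * m) * (adjoint S) ^ (a * n) * T) * V
        = S ^ m * (adjoint S) ^ n * (adjoint V * T * V)) := by
  classical
  have horth : ∀ i j : ℕ, ⟪e i, e j⟫_ℂ = if i = j then 1 else 0 := by
    have := e.orthonormal
    rw [orthonormal_iff_ite] at this
    exact this
  -- powers of S on basis
  have hSpow : ∀ (k n : ℕ), (S ^ k) (e n) = e (n + k) := by
    intro k
    induction k with
    | zero => simp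
    | succ k ih =>
      intro n
      rw [pow_succ, ContinuousLinearMap.mul_apply, hS, ih, show n + 1 + k = n + (k + 1) by ring]
  -- adjoint of S on basis
  have hSadj : ∀ n, (adjoint S) (e (n + 1)) = e n := by
    intro n
    apply vec_ext e
    intro i
    rw [adjoint_inner_right, hS, horth, horth]
    simp
  have hSadj0 : (adjoint S) (e 0) = 0 := by
    apply vec_ext e
    intro i
    rw [adjoint_inner_right, hS, horth]
    simp
  have hSadjpow : ∀ (k n : ℕ), ((adjoint S) ^ k) (e (n + k)) = e n := by
    intro k
    induction k with
    | zero => simp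
    | succ k ih =>
      intro n
      rw [pow_succ, ContinuousLinearMap.mul_apply, show n + (k+1) = (n + k) + 1 from rfl, hSadj, ih]
  have hSadjpow0 : ((adjoint S) ^ a) (e 0) = 0 := by
    obtain ⟨b, rfl⟩ := Nat.exists_eq_add_of_lt ha
    rw [pow_succ, ContinuousLinearMap.mul_apply]
    simp [hSadj0]
  -- adjoint of V on basis
  have hVadj : ∀ n, (adjoint V) (e (a * n)) = e n := by
    intro n
    apply vec_ext e
    intro i
    rw [adjoint_inner_right, hV, horth, horth]
    by_cases h : i = n
    · simp [h]
    · rw [if_neg h, if_neg (fun hc => h (Nat.eq_of_mul_eq_mul_left ha hc))]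
  -- part 1
  have h1 : adjoint V * V = 1 := by
    apply basis_ext e
    intro n
    rw [ContinuousLinearMap.mul_apply, hV, hVadj, ContinuousLinearMap.one_apply]
  -- part 2
  have h2 : V * S = S ^ a * V := by
    apply basis_ext e
    intro n
    rw [ContinuousLinearMap.mul_apply, ContinuousLinearMap.mul_apply, hS, hV, hV, hSpow, Nat.mul_succ, Nat.add_comm]
  -- part 3
  have h3 : (adjoint S) ^ a * V = V * adjoint S := by
    apply basis_ext e
    intro n
    cases n with
    | zero =>
      rw [ContinuousLinearMap.mul_apply, ContinuousLinearMap.mul_apply, hSadj0, hV, map_zero, Nat.mul_zero, hSadjpow0]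
    | succ n =>
      rw [ContinuousLinearMap.mul_apply, ContinuousLinearMap.mul_apply, hSadj, hV, hV,
        show a * (n + 1) = a * n + a by ring, hSadjpow]
  -- derived commutation for powers
  have hVSpow : ∀ m : ℕ, V * S ^ m = S ^ (a * m) * V := by
    intro m
    induction m with
    | zero => simp
    | succ m ih =>
      rw [pow_succ, ← mul_assoc, ih, mul_assoc, h2, ← mul_assoc, ← pow_add,
        show a * m + a = a * (m + 1) by ring]
  have hSadjVpow : ∀ m : ℕ, (adjoint S) ^ (a * m) * V = V * (adjoint S) ^ m := by
    intro m
    induction m with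
    | zero => simp
    | succ m ih =>
      rw [show a * (m + 1) = a * m + a by ring, pow_add, mul_assoc, h3,
        ← mul_assoc, ih, mul_assoc, ← pow_succ]
  -- adjoint versions
  have hadj1 : ∀ m : ℕ, adjoint V * S ^ (a * m) = S ^ m * adjoint V := by
    intro m
    have := congrArg star (hSadjVpow m)
    simp only [star_mul, star_pow, star_eq_adjoint, adjoint_adjoint] at this
    exact this
  have hadj2 : ∀ n : ℕ, adjoint V * (adjoint S) ^ (a * n) = (adjoint S) ^ n * adjoint V := by
    intro n
    have := congrArg star (hVSpow n)
    simp only [star_mul, star_pow, star_eq_adjoint, adjoint_adjoint] at this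
    exact this.symm
  refine ⟨h1, h2, h3, ?_⟩
  intro T m n
  calc adjoint V * (S ^ (a * m) * (adjoint S) ^ (a * n) * T) * V
      = (adjoint V * S ^ (a * m)) * ((adjoint S) ^ (a * n)) * T * V := by
        simp only [mul_assoc]
    _ = S ^ m * ((adjoint V * (adjoint S) ^ (a * n)) * T * V) := by
        rw [hadj1]; simp only [mul_assoc]
    _ = S ^ m * (adjoint S) ^ n * (adjoint V * T * V) := by
        rw [hadj2]; simp only [mul_assoc]
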